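/- Let R be a finite nonzero commutative ring with identity, |R| = r, let n ≥ 2, and let f_i : R^{2i-2} → R for 2 ≤ i ≤ n be arbitrary functions. Then the complete bipartite graph K_{r^n,r^n} admits an edge-decomposition by BΓ(R; f_2,…,f_n): there is a collection of subgraphs of K_{r^n,r^n}, each isomorphic to BΓ(R; f_2,…,f_n), whose edge sets partition the edge set of K_{r^n,r^n}. -/

import Mathlib

/-!
The adjacency equations of `BΓ(R; f₂, …, f_n)` are triangular: the `i`-th one determines `lᵢ`
from `p` and `l₁, …, l_{i-1}`. Hence a point `p` has exactly one neighbour `[l]` with any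
prescribed first coordinate `l₁` (index `0` below). Translating all lines by a vector `a` gives
an isomorphic subgraph of `K_{R^n, R^n}`, and for every point `p` and line `m` there is then
exactly one `a` with `a₁ = 0` such that `p` is adjacent to `m - a`. So the `r^{n-1}` translates
by vectors with vanishing first coordinate partition the edges of `K_{R^n, R^n}`.
-/

/-- The adjacency condition of the graph `BΓ(R; f₂, …, f_n)`. -/
def bAdj {R : Type} [CommRing R] (n : ℕ)
    (f : (i : ℕ) → (Fin i → R) → (Fin i → R) → R)
    (p l : Fin n → R) : Prop :=
  ∀ i : Fin n, 1 ≤ (i : ℕ) →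
    p i + l i = f i (fun j => p (Fin.castLE i.isLt.le j))
                    (fun j => l (Fin.castLE i.isLt.le j))

/-- The bipartite graph `BΓ(R; f₂, …, f_n)`. -/
def BGamma (R : Type) [CommRing R] (n : ℕ)
    (f : (i : ℕ) → (Fin i → R) → (Fin i → R) → R) :
    SimpleGraph ((Fin n → R) ⊕ (Fin n → R)) :=
  SimpleGraph.fromRel (fun x y => ∃ p l, x = Sum.inl p ∧ y = Sum.inr l ∧ bAdj n f p l)

section Adjacency

variable {R : Type} [CommRing R] (f : (i : ℕ) → (Fin i → R) → (Fin i → R) → R)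

theorem bAdj_succ_iff {n : ℕ} (hn : 1 ≤ n) (p l : Fin (n + 1) → R) :
    bAdj (n + 1) f p l ↔
      bAdj n f (Fin.init p) (Fin.init l) ∧
        p (Fin.last n) + l (Fin.last n) = f n (Fin.init p) (Fin.init l) := by
  unfold bAdj
  rw [Fin.forall_fin_succ']
  simp only [Fin.val_last, hn, forall_const]
  rfl

theorem bAdj_one (p l : Fin 1 → R) : bAdj 1 f p l := by
  intro i hi
  omega

theorem existsUnique_bAdj {n : ℕ} (p : Fin (n + 1) → R) (c : R) :
    ∃! l : Fin (n + 1) → R, l 0 = c ∧ bAdj (n + 1) f p l := by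
  induction n with
  | zero =>
    refine ⟨fun _ => c, ⟨rfl, bAdj_one f p _⟩, fun l ⟨hl, _⟩ => ?_⟩
    funext i
    rwa [Fin.fin_one_eq_zero i]
  | succ n ih =>
    obtain ⟨l, ⟨hl0, hl⟩, hl_unique⟩ := ih (Fin.init p)
    refine ⟨Fin.snoc l (f (n + 1) (Fin.init p) l - p (Fin.last _)), ⟨?_, ?_⟩, ?_⟩
    · rwa [Fin.snoc_apply_zero]
    · rw [bAdj_succ_iff f (by omega), Fin.init_snoc, Fin.snoc_last]
      exact ⟨hl, by ring⟩
    · rintro l' ⟨hl'0, hl'⟩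
      obtain ⟨hinit_adj, hlast⟩ := (bAdj_succ_iff f (by omega) p l').1 hl'
      have hinit : Fin.init l' = l := hl_unique _ ⟨hl'0, hinit_adj⟩
      rw [hinit] at hlast
      rw [← Fin.snoc_init_self l', hinit]
      congr 1
      linear_combination hlast

end Adjacency

section Decomposition

open SimpleGraph

def HasEdgeDecomposition {V U : Type*} (G : SimpleGraph V) (H : SimpleGraph U) : Prop :=
  ∃ (ι : Type) (c : ι → SimpleGraph V), (∀ i, c i ≤ G) ∧ (∀ i, Nonempty (c i ≃g H)) ∧
    ∀ e, e ∈ G.edgeSet ↔ ∃! i, e ∈ (c i).edgeSet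

theorem HasEdgeDecomposition.of_iso {V V' U : Type*} {G : SimpleGraph V} {G' : SimpleGraph V'}
    {H : SimpleGraph U} (φ : G ≃g G') (h : HasEdgeDecomposition G H) :
    HasEdgeDecomposition G' H := by
  obtain ⟨ι, c, hle, hiso, hpart⟩ := h
  refine ⟨ι, fun i => (c i).comap φ.symm, fun i u v huv => ?_,
    fun i => ⟨(Iso.comap φ.symm.toEquiv (c i)).trans (hiso i).some⟩, fun e => ?_⟩
  · exact φ.symm.map_adj_iff.1 (hle i huv)
  · induction e using Sym2.ind with
    | _ u v =>
      simpa only [mem_edgeSet, comap_adj, φ.symm.map_adj_iff] using hpart s(φ.symm u, φ.symm v)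

end Decomposition

section Shift

open SimpleGraph Sum

variable {R : Type} [CommRing R] (f : (i : ℕ) → (Fin i → R) → (Fin i → R) → R)

theorem bGamma_adj_inl_inr {n : ℕ} (p l : Fin n → R) :
    (BGamma R n f).Adj (inl p) (inr l) ↔ bAdj n f p l := by
  simp [BGamma]

theorem bGamma_le_completeBipartiteGraph (n : ℕ) :
    BGamma R n f ≤ completeBipartiteGraph (Fin n → R) (Fin n → R) := by
  intro u v huv
  cases u <;> cases v <;> simp_all [BGamma]

def lineShift {n : ℕ} (a : Fin n → R) :
    (Fin n → R) ⊕ (Fin n → R) ≃ (Fin n → R) ⊕ (Fin n → R) :=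
  Equiv.sumCongr (Equiv.refl _) (Equiv.subRight a)

theorem comap_lineShift_le {n : ℕ} (a : Fin n → R) :
    (BGamma R n f).comap (lineShift a) ≤ completeBipartiteGraph (Fin n → R) (Fin n → R) := by
  intro u v huv
  have := bGamma_le_completeBipartiteGraph f n huv
  cases u <;> cases v <;> simp_all [lineShift]

theorem existsUnique_bAdj_sub {n : ℕ} (p m : Fin (n + 1) → R) :
    ∃! a : {a : Fin (n + 1) → R // a 0 = 0}, bAdj (n + 1) f p (m - a) := by
  obtain ⟨l, ⟨hl0, hl⟩, hl_unique⟩ := existsUnique_bAdj f p (m 0)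
  refine ⟨⟨m - l, by simp [hl0]⟩, by simpa using hl, fun a ha => Subtype.ext ?_⟩
  change a.1 = m - l
  rw [← hl_unique (m - a) ⟨by simp [a.2], ha⟩, sub_sub_cancel]

theorem completeBipartiteGraph_adj_iff_existsUnique {n : ℕ}
    (u v : (Fin (n + 1) → R) ⊕ (Fin (n + 1) → R)) :
    (completeBipartiteGraph _ _).Adj u v ↔
      ∃! a : {a : Fin (n + 1) → R // a 0 = 0},
        ((BGamma R (n + 1) f).comap (lineShift a.1)).Adj u v := by
  cases u with
  | inl p =>
    cases v with
    | inl q => simp [lineShift, BGamma]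
    | inr m =>
      refine iff_of_true (by simp) ?_
      simpa [lineShift, bGamma_adj_inl_inr] using existsUnique_bAdj_sub f p m
  | inr m =>
    cases v with
    | inl p =>
      refine iff_of_true (by simp) ?_
      simpa [lineShift, bGamma_adj_inl_inr, adj_comm] using existsUnique_bAdj_sub f p m
    | inr q => simp [lineShift, BGamma]

theorem hasEdgeDecomposition_completeBipartiteGraph_bGamma (n : ℕ) :
    HasEdgeDecomposition (completeBipartiteGraph (Fin (n + 1) → R) (Fin (n + 1) → R))
      (BGamma R (n + 1) f) :=
  ⟨{a : Fin (n + 1) → R // a 0 = 0}, fun a => (BGamma R (n + 1) f).comap (lineShift a.1),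
    fun a => comap_lineShift_le f a.1, fun a => ⟨Iso.comap _ _⟩,
    fun e => by
      induction e using Sym2.ind with
      | _ u v => exact completeBipartiteGraph_adj_iff_existsUnique f u v⟩

end Shift

theorem statement_5_general (R : Type) [CommRing R] [Fintype R] (n : ℕ) (hn : 2 ≤ n)
    (f : (i : ℕ) → (Fin i → R) → (Fin i → R) → R) :
    ∃ (ι : Type) (c : ι → SimpleGraph (Fin (Fintype.card R ^ n) ⊕ Fin (Fintype.card R ^ n))),
      (∀ i, c i ≤ completeBipartiteGraph (Fin (Fintype.card R ^ n)) (Fin (Fintype.card R ^ n))) ∧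
      (∀ i, Nonempty (c i ≃g BGamma R n f)) ∧
      (∀ e : Sym2 (Fin (Fintype.card R ^ n) ⊕ Fin (Fintype.card R ^ n)),
        e ∈ (completeBipartiteGraph (Fin (Fintype.card R ^ n))
              (Fin (Fintype.card R ^ n))).edgeSet ↔ ∃! i, e ∈ (c i).edgeSet) := by
  obtain ⟨m, rfl⟩ : ∃ m, n = m + 1 := ⟨n - 1, by omega⟩
  let e : (Fin (m + 1) → R) ≃ Fin (Fintype.card R ^ (m + 1)) :=
    Fintype.equivFinOfCardEq (by simp)
  exact (hasEdgeDecomposition_completeBipartiteGraph_bGamma f m).of_iso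
    (SimpleGraph.completeBipartiteGraphCongr e e)

/-- For `|R| = r`, the complete bipartite graph `K_{r^n, r^n}` admits an edge-decomposition
into copies of `BΓ(R; f₂,…,f_n)`: a family of subgraphs, each isomorphic to
`BΓ(R; f₂,…,f_n)`, whose edge sets partition the edge set of `K_{r^n, r^n}`. -/
theorem statement_5 (R : Type) [CommRing R] [Nontrivial R] [Fintype R] (n : ℕ) (hn : 2 ≤ n)
    (f : (i : ℕ) → (Fin i → R) → (Fin i → R) → R) :
    ∃ (ι : Type) (c : ι → SimpleGraph (Fin (Fintype.card R ^ n) ⊕ Fin (Fintype.card R ^ n))),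
      (∀ i, c i ≤ completeBipartiteGraph (Fin (Fintype.card R ^ n)) (Fin (Fintype.card R ^ n))) ∧
      (∀ i, Nonempty (c i ≃g BGamma R n f)) ∧
      (∀ e : Sym2 (Fin (Fintype.card R ^ n) ⊕ Fin (Fintype.card R ^ n)),
        e ∈ (completeBipartiteGraph (Fin (Fintype.card R ^ n))
              (Fin (Fintype.card R ^ n))).edgeSet ↔ ∃! i, e ∈ (c i).edgeSet) :=
  statement_5_general R n hn f
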